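/- arXiv:0904.0034 — 4 statements merged into one kernel-verified Lean document; each statement's English description precedes it below -/
import Mathlib

section
/- Arden's Rule: if X, A, B are sets of finite strings over an alphabet with the empty string not in A, and X = (A ∘ X) ∪ B where ∘ denotes elementwise concatenation, then X = A* ∘ B, where A* = ⋃ₙ Aⁿ with A⁰ = {ε} and Aⁿ = A ∘ Aⁿ⁻¹. -/
/-- Elementwise concatenation of two sets of finite strings. -/
def conc {A : Type} (R S : Set (List A)) : Set (List A) :=
  { l | ∃ a ∈ R, ∃ b ∈ S, l = a ++ b }

/-- `npow R n` is the `n`-fold concatenation power `Rⁿ`, with `R⁰ = {ε}`. -/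
def npow {A : Type} (R : Set (List A)) : ℕ → Set (List A)
  | 0 => {[]}
  | n + 1 => conc R (npow R n)

/-- Kleene star: `R* = ⋃ₙ Rⁿ`. -/
def star {A : Type} (R : Set (List A)) : Set (List A) :=
  ⋃ n : ℕ, npow R n

/-- Arden's Rule: if the empty string is not in `A` and `X = (A ∘ X) ∪ B`,
then `X = A* ∘ B`. -/
theorem arden {α : Type} (A X B : Set (List α))
    (hε : [] ∉ A) (hX : X = conc A X ∪ B) :
    X = conc (star A) B := by
  have hsub : ∀ n, conc (npow A n) B ⊆ X := by
    intro n
    induction n with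
    | zero =>
      rintro x ⟨a, ha, b, hb, rfl⟩
      simp only [npow, Set.mem_singleton_iff] at ha
      subst ha
      rw [hX]; exact Or.inr hb
    | succ n ih =>
      rintro x ⟨a, ha, b, hb, rfl⟩
      obtain ⟨c, hc, d, hd, rfl⟩ := ha
      rw [hX]
      exact Or.inl ⟨c, hc, d ++ b, ih ⟨d, hd, b, hb, rfl⟩, List.append_assoc c d b⟩
  apply Set.Subset.antisymm
  · intro x hx
    obtain ⟨n, hlen⟩ : ∃ n, x.length = n := ⟨x.length, rfl⟩
    induction n using Nat.strong_induction_on generalizing x with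
    | _ n ih =>
      subst hlen
      
      rw [hX] at hx
      rcases hx with ⟨a, ha, y, hy, rfl⟩ | hb
      · have halen : 0 < a.length := by
          cases a with
          | nil => exact absurd ha hε
          | cons h t => simp
        obtain ⟨s, hs, b, hb, rfl⟩ := ih y.length (by simp [halen]) hy rfl
        obtain ⟨m, hm⟩ := Set.mem_iUnion.mp hs
        exact ⟨a ++ s, Set.mem_iUnion.mpr ⟨m + 1, ⟨a, ha, s, hm, rfl⟩⟩, b, hb,
          (List.append_assoc a s b).symm⟩
      · exact ⟨[], Set.mem_iUnion.mpr ⟨0, rfl⟩, x, hb, rfl⟩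
  · rintro x ⟨s, hs, b, hb, rfl⟩
    obtain ⟨n, hn⟩ := Set.mem_iUnion.mp hs
    exact hsub n ⟨s, hn, b, hb, rfl⟩
end

section
/- For sCCS-PDL (Kripke semantics over relations R_α for basic actions, with the satisfaction of ⟨P⟩φ defined via finite possible runs of P), two processes P and Q satisfy R_f(P) = R_f(Q) if and only if the formula ⟨P⟩p ↔ ⟨Q⟩p is valid in all models. -/
/-- A strong bisimulation for a labeled transition system with transitions
`tr P α P'` (P performs α and becomes P') and terminating transitions
`tm P α` (P performs α and successfully terminates). -/
def IsBisim {Proc Act : Type} (tr : Proc → Act → Proc → Prop) (tm : Proc → Act → Prop)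
    (Z : Proc → Proc → Prop) : Prop :=
  ∀ ⦃P Q⦄, Z P Q →
    (∀ α P', tr P α P' → ∃ Q', tr Q α Q' ∧ Z P' Q') ∧
    (∀ α Q', tr Q α Q' → ∃ P', tr P α P' ∧ Z P' Q') ∧
    (∀ α, tm P α ↔ tm Q α)

/-- Strong bisimilarity: some strong bisimulation relates `P` and `Q`. -/
def Bisimilar {Proc Act : Type} (tr : Proc → Act → Proc → Prop) (tm : Proc → Act → Prop)
    (P Q : Proc) : Prop :=
  ∃ Z, IsBisim tr tm Z ∧ Z P Q

/-- `TermRun tr tm P l` means `P ⇒l ✓`: `P` can perform the (nonempty) sequence `l`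
of actions and successfully terminate. -/
inductive TermRun {Proc Act : Type} (tr : Proc → Act → Proc → Prop) (tm : Proc → Act → Prop) :
    Proc → List Act → Prop
  | single {P : Proc} {α : Act} : tm P α → TermRun tr tm P [α]
  | cons {P P' : Proc} {α : Act} {l : List Act} :
      tr P α P' → TermRun tr tm P' l → TermRun tr tm P (α :: l)

/-- The set of finite possible runs of a process. -/
def Rf {Proc Act : Type} (tr : Proc → Act → Proc → Prop) (tm : Proc → Act → Prop)
    (P : Proc) : Set (List Act) :=
  { l | TermRun tr tm P l }

/-- `Matches R w l v`: there is a finite path from `w` to `v` in the frame with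
relations `R` matched by the nonempty sequence of actions `l`
(the `i`-th edge of the path lies in the relation of the `i`-th action). -/
inductive Matches {W Act : Type} (R : Act → W → W → Prop) : W → List Act → W → Prop
  | single {w v : W} {α : Act} : R α w v → Matches R w [α] v
  | cons {w u v : W} {α : Act} {l : List Act} :
      R α w u → Matches R u l v → Matches R w (α :: l) v

/-- Satisfaction of `⟨P⟩p` at `w`, where `Rset` is the set of finite possible runs
of `P` and `V` is the set of states satisfying `p`: there is a finite path from `w`,
matched by some run in `Rset`, ending in a state of `V`. -/
def DiaSat {W Act : Type} (R : Act → W → W → Prop) (Rset : Set (List Act))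
    (V : Set W) (w : W) : Prop :=
  ∃ (l : List Act) (v : W), l ∈ Rset ∧ Matches R w l v ∧ v ∈ V


/-- In the canonical frame `R α u v ↔ v = u ++ [α]`, a match ends exactly at the
concatenation. -/
lemma matches_canonical_eq {Act : Type} {u v : List Act} {l : List Act}
    (h : Matches (fun (α : Act) (u v : List Act) => v = u ++ [α]) u l v) :
    v = u ++ l := by
  induction h with
  | single h => simpa using h
  | cons h _ ih => subst h; simp at ih ⊢; simpa using ih

lemma matches_canonical_exists {Act : Type} (l : List Act) :
    ∀ (α : Act) (u : List Act), Matches (fun (α : Act) (u v : List Act) => v = u ++ [α]) u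
      (α :: l) (u ++ α :: l) := by
  induction l with
  | nil => intro α u; exact Matches.single rfl
  | cons β l ih =>
      intro α u
      refine Matches.cons (u := u ++ [α]) rfl ?_
      simpa using ih β (u ++ [α])

lemma termRun_ne_nil {Proc Act : Type} {tr : Proc → Act → Proc → Prop}
    {tm : Proc → Act → Prop} {P : Proc} {l : List Act} (h : TermRun tr tm P l) :
    l ≠ [] := by
  cases h <;> simp

/-- `R_f(P) = R_f(Q)` iff the formula `⟨P⟩p ↔ ⟨Q⟩p` is valid, i.e. holds at
every state of every model over every frame. -/
theorem Rf_eq_iff_valid {Proc Act : Type}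
    (tr : Proc → Act → Proc → Prop) (tm : Proc → Act → Prop) (P Q : Proc) :
    Rf tr tm P = Rf tr tm Q ↔
      ∀ (W : Type) (_ : Nonempty W) (R : Act → W → W → Prop) (V : Set W) (w : W),
        DiaSat R (Rf tr tm P) V w ↔ DiaSat R (Rf tr tm Q) V w := by
  constructor
  · intro h W _ R V w
    rw [h]
  · intro h
    ext l
    have key : ∀ (A B : Proc), l ∈ Rf tr tm A →
        (∀ (W : Type) (_ : Nonempty W) (R : Act → W → W → Prop) (V : Set W) (w : W),
          DiaSat R (Rf tr tm A) V w → DiaSat R (Rf tr tm B) V w) → l ∈ Rf tr tm B := by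
      intro A B hl himp
      obtain ⟨α, l', rfl⟩ : ∃ α l', l = α :: l' := by
        cases l with
        | nil => exact absurd rfl (termRun_ne_nil hl)
        | cons α l' => exact ⟨α, l', rfl⟩
      have hsat : DiaSat (fun (α : Act) (u v : List Act) => v = u ++ [α])
          (Rf tr tm A) {α :: l'} ([] : List Act) :=
        ⟨α :: l', α :: l', hl, by simpa using matches_canonical_exists l' α [], rfl⟩
      obtain ⟨m, v, hm, hmatch, hv⟩ := himp (List Act) ⟨[]⟩ _ _ _ hsat
      have := matches_canonical_eq hmatch
      simp at this hv
      rw [hv] at this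
      rwa [this]
    constructor
    · intro hl; exact key P Q hl (fun W hW R V w => (h W hW R V w).mp)
    · intro hl; exact key Q P hl (fun W hW R V w => (h W hW R V w).mpr)
end

section
/- If P ∼ Q (strongly bisimilar), then ⟨P⟩p ↔ ⟨Q⟩p is valid in all sCCS-PDL models. -/
lemma termRun_of_bisim {Proc Act : Type} {tr : Proc → Act → Proc → Prop}
    {tm : Proc → Act → Prop} {Z : Proc → Proc → Prop} (hZ : IsBisim tr tm Z) :
    ∀ {P l}, TermRun tr tm P l → ∀ {Q}, Z P Q → TermRun tr tm Q l := by
  intro P l h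
  induction h with
  | single htm =>
    intro Q hPQ
    exact TermRun.single (((hZ hPQ).2.2 _).mp htm)
  | cons htr _ ih =>
    intro Q hPQ
    obtain ⟨Q', hQ', hZ'⟩ := (hZ hPQ).1 _ _ htr
    exact TermRun.cons hQ' (ih hZ')

lemma Rf_eq_of_bisimilar {Proc Act : Type} {tr : Proc → Act → Proc → Prop}
    {tm : Proc → Act → Prop} {P Q : Proc} (h : Bisimilar tr tm P Q) :
    Rf tr tm P = Rf tr tm Q := by
  obtain ⟨Z, hZ, hPQ⟩ := h
  have hZ' : IsBisim tr tm (fun a b => Z b a) := by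
    intro a b hba
    obtain ⟨h1, h2, h3⟩ := hZ hba
    exact ⟨h2, h1, fun α => (h3 α).symm⟩
  ext l
  exact ⟨fun hl => termRun_of_bisim hZ hl hPQ,
    fun hl => termRun_of_bisim hZ' hl hPQ⟩

/-- If `P ∼ Q` (strongly bisimilar), then `⟨P⟩p ↔ ⟨Q⟩p` is valid in all models. -/
theorem bisimilar_valid {Proc Act : Type}
    (tr : Proc → Act → Proc → Prop) (tm : Proc → Act → Prop) (P Q : Proc)
    (h : Bisimilar tr tm P Q) :
    ∀ (W : Type) (_ : Nonempty W) (R : Act → W → W → Prop) (V : Set W) (w : W),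
      DiaSat R (Rf tr tm P) V w ↔ DiaSat R (Rf tr tm Q) V w := by
  rw [Rf_eq_of_bisimilar h]
  intro _ _ _ _ _
  rfl
end

section
/- Every proper breaker of a knot process P has a minimal proper breaker as a prefix: α⃗ is a proper breaker of P if and only if α⃗ = β⃗ · λ⃗ where β⃗ is a minimal proper breaker of P. -/
/-- Multi-step transitions: `Steps tr P l P'` means `P ⇒l P'`. -/
inductive Steps {Proc Act : Type} (tr : Proc → Act → Proc → Prop) :
    Proc → List Act → Proc → Prop
  | nil {P : Proc} : Steps tr P [] P
  | cons {P P' P'' : Proc} {α : Act} {l : List Act} :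
      tr P α P' → Steps tr P' l P'' → Steps tr P (α :: l) P''

/-- A loop of `P`: a nonempty sequence `l` with `P ⇒l P`. -/
def IsLoop {Proc Act : Type} (tr : Proc → Act → Proc → Prop) (P : Proc)
    (l : List Act) : Prop :=
  l ≠ [] ∧ Steps tr P l P

/-- A proper loop: a loop that admits no decomposition into two loops. -/
def IsProperLoop {Proc Act : Type} (tr : Proc → Act → Proc → Prop) (P : Proc)
    (l : List Act) : Prop :=
  IsLoop tr P l ∧ ¬ ∃ b c, l = b ++ c ∧ IsLoop tr P b ∧ IsLoop tr P c

/-- A breaker of `P`: a sequence no proper extension of which is a loop of `P`. -/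
def IsBreaker {Proc Act : Type} (tr : Proc → Act → Proc → Prop) (P : Proc)
    (l : List Act) : Prop :=
  ¬ ∃ b, l <+: b ∧ l ≠ b ∧ IsLoop tr P b

/-- A proper breaker: a breaker admitting no decomposition into a loop followed by
a breaker. -/
def IsProperBreaker {Proc Act : Type} (tr : Proc → Act → Proc → Prop) (P : Proc)
    (l : List Act) : Prop :=
  IsBreaker tr P l ∧ ¬ ∃ b c, l = b ++ c ∧ IsLoop tr P b ∧ IsBreaker tr P c

/-- A minimal proper breaker: a proper breaker no proper prefix of which is a
proper breaker. -/
def IsMinimalProperBreaker {Proc Act : Type} (tr : Proc → Act → Proc → Prop) (P : Proc)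
    (l : List Act) : Prop :=
  IsProperBreaker tr P l ∧ ¬ ∃ b, b <+: l ∧ b ≠ l ∧ IsProperBreaker tr P b

theorem Steps.append' {Proc Act : Type} {tr : Proc → Act → Proc → Prop} {P Q R : Proc}
    {l l' : List Act} (h1 : Steps tr P l Q) (h2 : Steps tr Q l' R) :
    Steps tr P (l ++ l') R := by
  induction h1 with
  | nil => exact h2
  | cons h _ ih => exact Steps.cons h (ih h2)

theorem IsLoop.append {Proc Act : Type} {tr : Proc → Act → Proc → Prop} {P : Proc}
    {a b : List Act} (h1 : IsLoop tr P a) (h2 : IsLoop tr P b) :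
    IsLoop tr P (a ++ b) :=
  ⟨by simp [h1.1], h1.2.append' h2.2⟩

theorem breaker_not_loop {Proc Act : Type} {tr : Proc → Act → Proc → Prop} {P : Proc}
    {l : List Act} (hb : IsBreaker tr P l) : ¬ IsLoop tr P l := by
  intro hl
  exact hb ⟨l ++ l, ⟨l, rfl⟩, fun h => hl.1 (by simpa using h), hl.append hl⟩

theorem properBreaker_append {Proc Act : Type} {tr : Proc → Act → Proc → Prop} {P : Proc}
    {b : List Act} (h : IsProperBreaker tr P b) (c : List Act) :
    IsProperBreaker tr P (b ++ c) := by
  constructor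
  · rintro ⟨d, hpre, hne, hloop⟩
    apply h.1
    refine ⟨d, (b.prefix_append c).trans hpre, ?_, hloop⟩
    rintro rfl
    have h1 := hpre.length_le
    simp only [List.length_append] at h1
    have hc : c = [] := by
      have : c.length = 0 := by omega
      simpa using this
    exact hne (by simp [hc])
  · rintro ⟨x, y, heq, hx, hy⟩
    have hxpre : x <+: b ++ c := ⟨y, heq.symm⟩
    rcases List.prefix_or_prefix_of_prefix hxpre (b.prefix_append c) with hxb | hbx
    · rcases hxb with ⟨r, hr⟩
      by_cases hrnil : r = []
      · subst hrnil
        simp only [List.append_nil] at hr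
        subst hr
        exact breaker_not_loop h.1 hx
      · have hrnb : ¬ IsBreaker tr P r := fun hrb => h.2 ⟨x, r, hr.symm, hx, hrb⟩
        have := not_not.mp hrnb
        obtain ⟨e, hre, hrne, hel⟩ := this
        apply h.1
        refine ⟨x ++ e, ?_, ?_, hx.append hel⟩
        · obtain ⟨t, ht⟩ := hre
          exact ⟨t, by rw [← hr, List.append_assoc, ht]⟩
        · intro h'
          have hlt : r.length < e.length :=
            lt_of_le_of_ne hre.length_le (fun hh => hrne (hre.eq_of_length hh))
          have : b.length = (x ++ e).length := by rw [h']
          rw [← hr] at this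
          simp only [List.length_append] at this
          omega
    · rcases hbx with ⟨s, hs⟩
      by_cases hsnil : s = []
      · subst hsnil
        simp only [List.append_nil] at hs
        subst hs
        exact breaker_not_loop h.1 hx
      · apply h.1
        refine ⟨x, ⟨s, hs⟩, ?_, hx⟩
        intro h'
        rw [h'] at hs
        exact hsnil (by simpa using hs)

/-- A sequence is a proper breaker of `P` iff it has a minimal proper breaker of
`P` as a prefix. -/
theorem properBreaker_iff_minimal_prefix {Proc Act : Type}
    (tr : Proc → Act → Proc → Prop) (P : Proc) (l : List Act) :
    IsProperBreaker tr P l ↔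
      ∃ b c, l = b ++ c ∧ IsMinimalProperBreaker tr P b := by
  constructor
  · intro h
    obtain ⟨n, hn⟩ : ∃ n, l.length = n := ⟨_, rfl⟩
    induction n using Nat.strong_induction_on generalizing l with
    | _ n ih =>
      subst hn
      by_cases hmin : ∃ b, b <+: l ∧ b ≠ l ∧ IsProperBreaker tr P b
      · obtain ⟨b, hpre, hne, hb⟩ := hmin
        have hlen : b.length < l.length :=
          lt_of_le_of_ne hpre.length_le (fun hh => hne (hpre.eq_of_length hh))
        obtain ⟨m, c, hmc, hm⟩ := ih b.length hlen b hb rfl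
        obtain ⟨t, ht⟩ := hpre
        exact ⟨m, c ++ t, by rw [← ht, hmc, List.append_assoc], hm⟩
      · exact ⟨l, [], by simp, h, hmin⟩
  · rintro ⟨b, c, rfl, hm⟩
    exact properBreaker_append hm.1 c
end
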